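/- arXiv:2502.09413 — 2 statements merged into one kernel-verified Lean document; each statement's English description precedes it below -/
import Mathlib

section
/- Let β : ℝ → ℝ be continuous on [x_j, α] with value β⁻ at α (from the left) and continuous on [α, x_{j+1}] with value β⁺ at α (from the right), with β(x) ≥ β₀ > 0 everywhere. Suppose |β(x) − β⁻| ≤ L(α − x) for x ∈ [x_j, α] and |β(x) − β⁺| ≤ L(x − α) for x ∈ [α, x_{j+1}], where h = x_{j+1} − x_j. Then the harmonic average β_{j+1/2} = ((1/h)∫_{x_j}^{x_{j+1}} β(x)^{-1}dx)^{-1} satisfies |β_{j+1/2} − β̄| ≤ C·h for a constant C depending only on β₀, L, max β, where β̄ = ((x_{j+1}−α)/(β⁺h) + (α−x_j)/(β⁻h))^{-1}. -/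
/-!
On each side of `α` the Lipschitz bound gives `|β⁻¹ - (β^∓)⁻¹| ≤ L h / β₀²`, so `∫ β⁻¹` differs
from `J = (α - x_j) / β⁻ + (x_{j+1} - α) / β⁺`, the integral of the two-valued coefficient, by at
most `L h² / β₀²`. Both integrals are at least `h / Mβ`, and on `[h / Mβ, ∞)` the map
`t ↦ (t / h)⁻¹` is `Mβ² / h`-Lipschitz; hence `|β_{j+1/2} - β̄| ≤ L Mβ² h / β₀²`. The one-sided
values `β^∓` lie in `[β₀, Mβ]` because they are limits of values of `β`.
-/

open Set intervalIntegral MeasureTheory Filter Topology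

lemma tendsto_nhdsLT_of_abs_sub_le {f : ℝ → ℝ} {a α c L : ℝ} (ha : a < α)
    (hf : ∀ x ∈ Ico a α, |f x - c| ≤ L * (α - x)) : Tendsto f (𝓝[<] α) (𝓝 c) := by
  have hlim : Tendsto (fun x => L * (α - x)) (𝓝[<] α) (𝓝 0) := by
    have : Continuous (fun x => L * (α - x)) := by fun_prop
    simpa using (this.tendsto α).mono_left nhdsWithin_le_nhds
  rw [tendsto_iff_norm_sub_tendsto_zero]
  exact squeeze_zero' (.of_forall fun _ => norm_nonneg _)
    (eventually_of_mem (Ico_mem_nhdsLT ha) hf) hlim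

lemma tendsto_nhdsGT_of_abs_sub_le {f : ℝ → ℝ} {α b c L : ℝ} (hb : α < b)
    (hf : ∀ x ∈ Ioc α b, |f x - c| ≤ L * (x - α)) : Tendsto f (𝓝[>] α) (𝓝 c) := by
  have hlim : Tendsto (fun x => L * (x - α)) (𝓝[>] α) (𝓝 0) := by
    have : Continuous (fun x => L * (x - α)) := by fun_prop
    simpa using (this.tendsto α).mono_left nhdsWithin_le_nhds
  rw [tendsto_iff_norm_sub_tendsto_zero]
  exact squeeze_zero' (.of_forall fun _ => norm_nonneg _)
    (eventually_of_mem (Ioc_mem_nhdsGT hb) hf) hlim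

lemma abs_inv_sub_inv_le {m u v : ℝ} (hm : 0 < m) (hu : m ≤ u) (hv : m ≤ v) :
    |u⁻¹ - v⁻¹| ≤ |u - v| / m ^ 2 := by
  have hu0 : 0 < u := hm.trans_le hu
  have hv0 : 0 < v := hm.trans_le hv
  rw [inv_sub_inv hu0.ne' hv0.ne', abs_div, abs_sub_comm, abs_of_pos (mul_pos hu0 hv0)]
  gcongr
  nlinarith

lemma abs_integral_inv_sub_le {β : ℝ → ℝ} {a b c m K : ℝ} (hab : a ≤ b) (hm : 0 < m)
    (hβ : ∀ x, m ≤ β x) (hc : m ≤ c) (hint : IntervalIntegrable (fun x => (β x)⁻¹) volume a b)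
    (hK : ∀ᵐ x, x ∈ uIoc a b → |β x - c| ≤ K) :
    |(∫ x in a..b, (β x)⁻¹) - (b - a) / c| ≤ K / m ^ 2 * (b - a) := by
  have hconst : ∫ _ in a..b, c⁻¹ = (b - a) / c := by simp [div_eq_mul_inv]
  rw [← hconst, ← integral_sub hint intervalIntegrable_const, ← abs_of_nonneg (sub_nonneg.2 hab)]
  refine norm_integral_le_of_norm_le_const_ae (f := fun x => (β x)⁻¹ - c⁻¹) ?_
  filter_upwards [hK] with x hx hmem
  exact (abs_inv_sub_inv_le hm (hβ x) hc).trans (by gcongr; exact hx hmem)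

lemma abs_integral_inv_sub_two_value_le {β : ℝ → ℝ} {a α b βm βp m L : ℝ}
    (haα : a < α) (hαb : α < b) (hm : 0 < m) (hL : 0 ≤ L) (hβ : ∀ x, m ≤ β x)
    (hβm : m ≤ βm) (hβp : m ≤ βp)
    (hleft : ∀ x ∈ Ico a α, |β x - βm| ≤ L * (α - x))
    (hright : ∀ x ∈ Ioc α b, |β x - βp| ≤ L * (x - α))
    (hint : IntervalIntegrable (fun x => (β x)⁻¹) volume a b) :
    |(∫ x in a..b, (β x)⁻¹) - ((α - a) / βm + (b - α) / βp)| ≤ L * (b - a) ^ 2 / m ^ 2 := by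
  have hα : α ∈ uIcc a b := mem_uIcc_of_le haα.le hαb.le
  have hint₁ := hint.mono_set (uIcc_subset_uIcc_left hα)
  have hint₂ := hint.mono_set (uIcc_subset_uIcc_right hα)
  have h₁ : |(∫ x in a..α, (β x)⁻¹) - (α - a) / βm| ≤ L * (b - a) / m ^ 2 * (α - a) := by
    refine abs_integral_inv_sub_le haα.le hm hβ hβm hint₁ ?_
    filter_upwards [volume.ae_ne α] with x hxα hx
    rw [uIoc_of_le haα.le] at hx
    refine (hleft x ⟨hx.1.le, hx.2.lt_of_ne hxα⟩).trans ?_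
    gcongr
    linarith [hx.1]
  have h₂ : |(∫ x in α..b, (β x)⁻¹) - (b - α) / βp| ≤ L * (b - a) / m ^ 2 * (b - α) := by
    refine abs_integral_inv_sub_le hαb.le hm hβ hβp hint₂ (.of_forall fun x hx => ?_)
    rw [uIoc_of_le hαb.le] at hx
    refine (hright x hx).trans ?_
    gcongr
    linarith [hx.2]
  rw [← integral_add_adjacent_intervals hint₁ hint₂]
  calc _ = |((∫ x in a..α, (β x)⁻¹) - (α - a) / βm) + ((∫ x in α..b, (β x)⁻¹) - (b - α) / βp)| := by
        ring_nf
    _ ≤ L * (b - a) / m ^ 2 * (α - a) + L * (b - a) / m ^ 2 * (b - α) :=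
        (abs_add_le _ _).trans (add_le_add h₁ h₂)
    _ = L * (b - a) ^ 2 / m ^ 2 := by ring

lemma div_le_integral_inv {β : ℝ → ℝ} {a b M : ℝ} (hab : a ≤ b) (hβ : ∀ x, 0 < β x)
    (hM : ∀ x, β x ≤ M) (hint : IntervalIntegrable (fun x => (β x)⁻¹) volume a b) :
    (b - a) / M ≤ ∫ x in a..b, (β x)⁻¹ := by
  simpa [div_eq_mul_inv] using
    integral_mono_on hab intervalIntegrable_const hint fun x _ => inv_anti₀ (hβ x) (hM x)

lemma abs_inv_div_sub_inv_div_le {I J h m E : ℝ} (hh : 0 < h) (hm : 0 < m)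
    (hI : h / m ≤ I) (hJ : h / m ≤ J) (hIJ : |I - J| ≤ E) :
    |(I / h)⁻¹ - (J / h)⁻¹| ≤ m ^ 2 * E / h := by
  have hI0 : 0 < I := (div_pos hh hm).trans_le hI
  have hJ0 : 0 < J := (div_pos hh hm).trans_le hJ
  have hIJ0 : (h / m) * (h / m) ≤ I * J := mul_le_mul hI hJ (by positivity) hI0.le
  have hE : 0 ≤ E := (abs_nonneg _).trans hIJ
  calc |(I / h)⁻¹ - (J / h)⁻¹| = h * |I - J| / (I * J) := by
        rw [inv_div, inv_div, div_sub_div _ _ hI0.ne' hJ0.ne', abs_div,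
          abs_of_pos (mul_pos hI0 hJ0), mul_comm I h, ← mul_sub, abs_mul, abs_of_pos hh,
          abs_sub_comm]
    _ ≤ h * E / ((h / m) * (h / m)) := by gcongr
    _ = m ^ 2 * E / h := by field_simp

/-- For a coefficient Lipschitz on each side of the discontinuity `α` and bounded
below by `β₀ > 0` and above by `Mβ`, the harmonic average over `[x_j, x_{j+1}]`
differs from the two-value weighted harmonic mean `β̄` by at most `C·h`, with `C`
depending only on `β₀`, `L`, `Mβ`. -/
theorem stmt4 (β₀ L Mβ : ℝ) (hβ₀ : 0 < β₀) (hL : 0 ≤ L) (hM : β₀ ≤ Mβ) :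
    ∃ C > 0, ∀ (xj α xj1 h : ℝ) (β : ℝ → ℝ) (βm βp : ℝ),
      xj < α → α < xj1 → h = xj1 - xj →
      ContinuousOn β (Ico xj α) → ContinuousOn β (Ioc α xj1) →
      (∀ x, β₀ ≤ β x) → (∀ x, β x ≤ Mβ) →
      (∀ x ∈ Ico xj α, |β x - βm| ≤ L * (α - x)) →
      (∀ x ∈ Ioc α xj1, |β x - βp| ≤ L * (x - α)) →
      IntervalIntegrable (fun x => (β x)⁻¹) volume xj xj1 →
      |((1 / h) * ∫ x in xj..xj1, (β x)⁻¹)⁻¹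
          - ((xj1 - α) / (βp * h) + (α - xj) / (βm * h))⁻¹| ≤ C * h := by
  have hMβ : 0 < Mβ := hβ₀.trans_le hM
  refine ⟨L * Mβ ^ 2 / β₀ ^ 2 + 1, by positivity, ?_⟩
  rintro xj α xj1 h β βm βp hxα hαx rfl - - hlb hub hleft hright hint
  have hh : 0 < xj1 - xj := by linarith
  have hβ : ∀ x, β x ∈ Icc β₀ Mβ := fun x => ⟨hlb x, hub x⟩
  have hβm : βm ∈ Icc β₀ Mβ :=
    isClosed_Icc.mem_of_tendsto (tendsto_nhdsLT_of_abs_sub_le hxα hleft) (.of_forall hβ)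
  have hβp : βp ∈ Icc β₀ Mβ :=
    isClosed_Icc.mem_of_tendsto (tendsto_nhdsGT_of_abs_sub_le hαx hright) (.of_forall hβ)
  have hβm0 : 0 < βm := hβ₀.trans_le hβm.1
  have hβp0 : 0 < βp := hβ₀.trans_le hβp.1
  have hJ : (xj1 - xj) / Mβ ≤ (α - xj) / βm + (xj1 - α) / βp := by
    calc (xj1 - xj) / Mβ = (α - xj) / Mβ + (xj1 - α) / Mβ := by ring
      _ ≤ _ := by gcongr <;> linarith [hβm.2, hβp.2]
  have hmean : (xj1 - α) / (βp * (xj1 - xj)) + (α - xj) / (βm * (xj1 - xj))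
      = ((α - xj) / βm + (xj1 - α) / βp) / (xj1 - xj) := by
    field_simp
    ring
  rw [hmean, one_div_mul_eq_div]
  refine (abs_inv_div_sub_inv_div_le hh hMβ
    (div_le_integral_inv (hxα.trans hαx).le (fun x => hβ₀.trans_le (hlb x)) hub hint) hJ
    (abs_integral_inv_sub_two_value_le hxα hαx hβ₀ hL hlb hβm.1 hβp.1 hleft hright hint)).trans ?_
  rw [show Mβ ^ 2 * (L * (xj1 - xj) ^ 2 / β₀ ^ 2) / (xj1 - xj)
      = L * Mβ ^ 2 / β₀ ^ 2 * (xj1 - xj) by field_simp]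
  linarith
end

section
/- Let β⁻, β⁺ > 0, 0 < α < 1, and suppose u is piecewise C³ on [0,1] \ {α} with one-sided limits u⁻, u⁺, u_x⁻, u_x⁺, u_xx⁻, u_xx⁺ at α, satisfying the jump relations u⁺ − u⁻ = J and β⁺u_x⁺ − β⁻u_x⁻ = V. Let x_j ≤ α < x_{j+1}, h = x_{j+1} − x_j, β̄ = ((x_{j+1}−α)/(β⁺h) + (α−x_j)/(β⁻h))^{-1}. Then β̄·(u(x_{j+1}) − u(x_j))/h − (β̄/h)·(J + (V/β⁺)(x_{j+1}−α)) = β⁻u_x⁻ + (β̄/h)·(u_xx⁺(x_{j+1}−α)²/2 − u_xx⁻(x_j−α)²/2) + R, where |R| ≤ C·h² with C depending only on β⁻, β⁺ and the C³ bounds of u on each side. -/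
open Real Set

lemma iterWithin_eq (f : ℝ → ℝ) (hf : ContDiff ℝ 3 f) {s : Set ℝ} (hs : UniqueDiffOn ℝ s)
    {x : ℝ} (hx : x ∈ s) (i : ℕ) (hi : i ≤ 3) :
    iteratedDerivWithin i f s x = iteratedDeriv i f x := by
  rw [iteratedDerivWithin_eq_iteratedFDerivWithin, iteratedDeriv_eq_iteratedFDeriv]
  have h := ((contDiff_iff_ftaylorSeries.mp hf).hasFTaylorSeriesUpToOn s).eq_iteratedFDerivWithin_of_uniqueDiffOn (m := i)
    (by exact_mod_cast Nat.cast_le.mpr hi) hs hx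
  rw [← h]; rfl

lemma taylor2_bound (f : ℝ → ℝ) (hf : ContDiff ℝ 3 f) (K a b : ℝ) (hab : a ≤ b)
    (hbd : ∀ x ∈ Icc a b, |iteratedDeriv 3 f x| ≤ K) :
    |f b - f a - deriv f a * (b - a) - deriv (deriv f) a * (b - a)^2 / 2| ≤ K * (b - a)^3 / 2 := by
  rcases eq_or_lt_of_le hab with rfl | hlt
  · simp
  have hs : UniqueDiffOn ℝ (Icc a b) := uniqueDiffOn_Icc hlt
  have ha : a ∈ Icc a b := ⟨le_rfl, hab⟩
  have hb : b ∈ Icc a b := ⟨hab, le_rfl⟩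
  have H := taylor_mean_remainder_bound (f := f) (a := a) (b := b) (C := K) (x := b) (n := 2)
    hab (hf.contDiffOn) hb (fun y hy => by
      rw [show (2+1 : ℕ) = 3 from rfl, iterWithin_eq f hf hs hy 3 (by norm_num)]
      simpa using hbd y hy)
  have ht : taylorWithinEval f 2 (Icc a b) a b
      = f a + deriv f a * (b - a) + deriv (deriv f) a * (b - a)^2 / 2 := by
    rw [taylor_within_apply]
    rw [Finset.sum_range_succ, Finset.sum_range_succ, Finset.sum_range_one]
    rw [iterWithin_eq f hf hs ha 0 (by norm_num), iterWithin_eq f hf hs ha 1 (by norm_num),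
      iterWithin_eq f hf hs ha 2 (by norm_num)]
    have h2 : iteratedDeriv 2 f = deriv (deriv f) := by
      ext x; simp [iteratedDeriv_succ, iteratedDeriv_one]
    simp [h2, iteratedDeriv_one]
    ring
  rw [ht] at H
  have : ‖f b - (f a + deriv f a * (b - a) + deriv (deriv f) a * (b - a)^2 / 2)‖
      = |f b - f a - deriv f a * (b - a) - deriv (deriv f) a * (b - a)^2 / 2| := by
    rw [Real.norm_eq_abs]; ring_nf
  rw [this] at H
  have h2 : ((Nat.factorial 2 : ℕ) : ℝ) = 2 := by norm_num [Nat.factorial]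
  rw [h2] at H
  exact H

lemma taylor2_bound_left (f : ℝ → ℝ) (hf : ContDiff ℝ 3 f) (K a b : ℝ) (hba : b ≤ a)
    (hbd : ∀ x ∈ Icc b a, |iteratedDeriv 3 f x| ≤ K) :
    |f b - f a - deriv f a * (b - a) - deriv (deriv f) a * (b - a)^2 / 2| ≤ K * (a - b)^3 / 2 := by
  set g : ℝ → ℝ := fun t => f (2*a - t) with hg
  have hgc : ContDiff ℝ 3 g := hf.comp (contDiff_const.sub contDiff_id)
  have key : ∀ (n : ℕ) (x : ℝ), iteratedDeriv n g x = (-1:ℝ)^n * iteratedDeriv n f (2*a - x) := by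
    intro n x
    have h1 := iteratedDeriv_comp_neg n (fun s => f (2*a + s)) x
    rw [iteratedDeriv_comp_const_add] at h1
    have e1 : g = (fun y => f (2*a + -y)) := by ext t; rw [hg]; ring_nf
    rw [e1, sub_eq_add_neg]
    simpa [smul_eq_mul] using h1
  have hg1 : deriv g a = - deriv f a := by
    have := key 1 a
    simpa [iteratedDeriv_one, show 2*a - a = a from by ring] using this
  have hg2 : deriv (deriv g) a = deriv (deriv f) a := by
    have h2 : ∀ (u : ℝ → ℝ), iteratedDeriv 2 u = deriv (deriv u) := by
      intro u; ext x; simp [iteratedDeriv_succ, iteratedDeriv_one]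
    have := key 2 a
    rw [h2, h2] at this
    simpa [show 2*a - a = a from by ring] using this
  have hbd' : ∀ x ∈ Icc a (2*a - b), |iteratedDeriv 3 g x| ≤ K := by
    intro x hx
    rw [key 3 x]
    have : 2*a - x ∈ Icc b a := ⟨by linarith [hx.2], by linarith [hx.1]⟩
    simpa [abs_mul] using hbd _ this
  have H := taylor2_bound g hgc K a (2*a - b) (by linarith) hbd'
  have e2 : g (2*a - b) = f b := by simp [hg]
  have e3 : g a = f a := by simp [hg, show 2*a - a = a from by ring]
  rw [e2, e3, hg1, hg2] at H
  have e4 : f b - f a - (- deriv f a) * (2*a - b - a) - deriv (deriv f) a * (2*a - b - a)^2/2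
      = f b - f a - deriv f a * (b - a) - deriv (deriv f) a * (b - a)^2/2 := by ring
  rw [e4] at H
  calc _ ≤ K * (2*a - b - a)^3 / 2 := H
    _ = K * (a - b)^3 / 2 := by ring

set_option maxHeartbeats 1000000 in
/-- Local expansion at the left irregular grid point: the corrected harmonic-average
flux difference approximates `β⁻ u_x⁻` with the explicit `O(1)` leading error term and
an `O(h²)` remainder, for `u` piecewise `C³` across `α` (given as one-sided `C³`
extensions `ul`, `ur` with third derivatives bounded by `K` on `[0,1]`, jumps
`J = [u]`, `V = [β u_x]`).  The constant `C` depends only on `β⁻`, `β⁺`, `K`. -/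
theorem stmt15 (βm βp K : ℝ) (hβm : 0 < βm) (hβp : 0 < βp) (hK : 0 ≤ K) :
    ∃ C > 0, ∀ (α xj xj1 h J V : ℝ) (ul ur : ℝ → ℝ),
      0 ≤ xj → xj ≤ α → α < xj1 → xj1 ≤ 1 → h = xj1 - xj →
      ContDiff ℝ 3 ul → ContDiff ℝ 3 ur →
      (∀ x ∈ Icc (0:ℝ) 1, |iteratedDeriv 3 ul x| ≤ K) →
      (∀ x ∈ Icc (0:ℝ) 1, |iteratedDeriv 3 ur x| ≤ K) →
      J = ur α - ul α →
      V = βp * deriv ur α - βm * deriv ul α →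
      ∃ R : ℝ,
        ((xj1 - α) / (βp * h) + (α - xj) / (βm * h))⁻¹ * (ur xj1 - ul xj) / h
            - (((xj1 - α) / (βp * h) + (α - xj) / (βm * h))⁻¹ / h)
              * (J + (V / βp) * (xj1 - α))
          = βm * deriv ul α
            + (((xj1 - α) / (βp * h) + (α - xj) / (βm * h))⁻¹ / h)
              * (deriv (deriv ur) α * (xj1 - α) ^ 2 / 2
                 - deriv (deriv ul) α * (xj - α) ^ 2 / 2)
            + R
        ∧ |R| ≤ C * h ^ 2 := by
  set M : ℝ := max βm βp with hM
  have hM0 : 0 < M := lt_max_of_lt_left hβm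
  refine ⟨M * K + 1, by positivity, ?_⟩
  intro α xj xj1 h J V ul ur h0 h1 h2 h3 hh hul hur hKl hKr hJ hV
  have hpos : 0 < h := by rw [hh]; linarith
  -- Taylor expansions on each side
  have hEr := taylor2_bound ur hur K α xj1 (le_of_lt h2)
    (fun x hx => hKr x ⟨by linarith [hx.1], by linarith [hx.2]⟩)
  have hEl := taylor2_bound_left ul hul K α xj h1
    (fun x hx => hKl x ⟨by linarith [hx.1], by linarith [hx.2]⟩)
  set Er : ℝ := ur xj1 - ur α - deriv ur α * (xj1 - α) - deriv (deriv ur) α * (xj1 - α)^2/2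
    with hErdef
  set El : ℝ := ul xj - ul α - deriv ul α * (xj - α) - deriv (deriv ul) α * (xj - α)^2/2
    with hEldef
  set s : ℝ := (xj1 - α) / (βp * h) + (α - xj) / (βm * h) with hsdef
  have hs : 0 < s := add_pos_of_pos_of_nonneg
    (div_pos (by linarith) (by positivity)) (div_nonneg (by linarith) (by positivity))
  have hden : 0 < βm * (xj1 - α) + βp * (α - xj) := by nlinarith
  have hseq : s = (βm * (xj1 - α) + βp * (α - xj)) / (βp * βm * h) := by
    rw [hsdef]; field_simp
  have hsi : s⁻¹ = (βp * βm * h) / (βm * (xj1 - α) + βp * (α - xj)) := by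
    rw [hseq, inv_div]
  refine ⟨s⁻¹ / h * (Er - El), ?_, ?_⟩
  · have expr : ur xj1 = Er + ur α + deriv ur α * (xj1 - α)
        + deriv (deriv ur) α * (xj1 - α)^2/2 := by rw [hErdef]; ring
    have expl : ul xj = El + ul α + deriv ul α * (xj - α)
        + deriv (deriv ul) α * (xj - α)^2/2 := by rw [hEldef]; ring
    rw [expr, expl, hJ, hV, hsi]
    field_simp
    ring
  · -- bound on the remainder
    have hd1 : xj1 - α ≤ h := by rw [hh]; linarith
    have hd0 : α - xj ≤ h := by rw [hh]; linarith
    have hErh : |Er| ≤ K * h^3 / 2 := by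
      refine hEr.trans ?_
      have h5 : (xj1 - α)^3 ≤ h^3 := pow_le_pow_left₀ (by linarith) hd1 3
      have := mul_le_mul_of_nonneg_left h5 hK
      linarith
    have hElh : |El| ≤ K * h^3 / 2 := by
      refine hEl.trans ?_
      have h5 : (α - xj)^3 ≤ h^3 := pow_le_pow_left₀ (by linarith) hd0 3
      have := mul_le_mul_of_nonneg_left h5 hK
      linarith
    have hA : |Er - El| ≤ K * h^3 := by
      calc |Er - El| ≤ |Er| + |El| := abs_sub _ _
        _ ≤ K * h^3 := by linarith
    have hsM : s⁻¹ ≤ M := by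
      rw [hsi, div_le_iff₀ hden]
      have p1 : 0 ≤ (M - βp) * βm * (xj1 - α) :=
        mul_nonneg (mul_nonneg (sub_nonneg.mpr (le_max_right βm βp)) hβm.le) (by linarith)
      have p2 : 0 ≤ (M - βm) * βp * (α - xj) :=
        mul_nonneg (mul_nonneg (sub_nonneg.mpr (le_max_left βm βp)) hβp.le) (by linarith)
      have e3 : βp * βm * h = βp * βm * (xj1 - α) + βp * βm * (α - xj) := by rw [hh]; ring
      nlinarith [p1, p2, e3]
    have hs' : 0 < s⁻¹ := inv_pos.mpr hs
    rw [abs_mul, abs_div, abs_of_pos hs', abs_of_pos hpos]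
    calc s⁻¹ / h * |Er - El| ≤ M / h * (K * h^3) := by
          apply mul_le_mul (div_le_div_of_nonneg_right hsM hpos.le) hA (abs_nonneg _) (by positivity)
      _ = M * K * h^2 := by field_simp
      _ ≤ (M * K + 1) * h^2 := by nlinarith
end
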